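/- arXiv:1710.01917 — 2 statements merged into one kernel-verified Lean document; each statement's English description precedes it below -/
import Mathlib

section
/- For every integer k > 2, there are infinitely many connected highly-regular graphs of valency k which are not distance-regular graphs; equivalently, for every integer k > 2 and every N, there exists a connected k-regular highly-regular graph on more than N vertices which is not a distance-regular graph. -/
/-- A partition of the vertex set (encoded as a cell-assignment map `P : V → Fin m`)
witnessing that `C` is a collapsed adjacency matrix at the vertex `u`:
the cell of index `0` is exactly `{u}`, every cell is nonempty, and every vertex in
cell `j` has exactly `C i j` neighbours in cell `i`. -/
def IsWitnessingPartition {V : Type*} [Fintype V] (G : SimpleGraph V) {m : ℕ}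
    (C : Fin m → Fin m → ℕ) (u : V) (P : V → Fin m) : Prop :=
  (∀ v : V, (P v : ℕ) = 0 ↔ v = u) ∧
  (∀ t : Fin m, ∃ v : V, P v = t) ∧
  (∀ (i j : Fin m) (y : V), P y = j → {z : V | P z = i ∧ G.Adj y z}.ncard = C i j)

/-- `C` is a collapsed adjacency matrix (CAM) of size `m` for `G`: `2 ≤ m`, `m < n`
(with `m = n` allowed only when `n = 2`), and every vertex admits a witnessing partition. -/
def IsCAM {V : Type*} [Fintype V] (G : SimpleGraph V) {m : ℕ}
    (C : Fin m → Fin m → ℕ) : Prop :=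
  2 ≤ m ∧ (m < Fintype.card V ∨ (m = Fintype.card V ∧ Fintype.card V = 2)) ∧
  ∀ u : V, ∃ P : V → Fin m, IsWitnessingPartition G C u P

/-- A graph is highly-regular if it admits some CAM. -/
def IsHighlyRegular {V : Type*} [Fintype V] (G : SimpleGraph V) : Prop :=
  ∃ (m : ℕ) (C : Fin m → Fin m → ℕ), IsCAM G C

/-- The index of a highly-regular graph: the least size of a CAM. -/
noncomputable def hrIndex {V : Type*} [Fintype V] (G : SimpleGraph V) : ℕ :=
  sInf {m : ℕ | ∃ C : Fin m → Fin m → ℕ, IsCAM G C}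

/-- A connected graph is distance-regular if the numbers `|D_1(v) ∩ D_{i-1}(u)|`,
`|D_1(v) ∩ D_i(u)|`, `|D_1(v) ∩ D_{i+1}(u)|` depend only on `i = d(u,v)`. -/
def IsDistanceRegular {V : Type*} [Fintype V] (G : SimpleGraph V) : Prop :=
  G.Connected ∧ ∀ i : ℕ, 1 ≤ i → i ≤ G.diam →
    ∀ j : ℕ, j = i - 1 ∨ j = i ∨ j = i + 1 →
    ∀ u v x y : V, G.dist u v = i → G.dist x y = i →
      {w : V | G.Adj v w ∧ G.dist u w = j}.ncard =
      {w : V | G.Adj y w ∧ G.dist x w = j}.ncard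

/-!
The graphs are circulant graphs on `ℤ/n` (`n` even and large) with jumps `±1, …, ±⌊k/2⌋`,
together with `n/2` when `k` is odd, so they are `k`-regular and connected.

Every circulant graph on `ℤ/n` is highly regular: around a vertex `u`, take as cells the sets
`{u + a, u - a}`, indexed by the cyclic distance `a ≤ n/2`. The automorphisms `z ↦ ±(z - u)`
carry these cells to the cells around `0`, so the neighbour counts depend only on the cells.

They are not distance-regular: `0` and `2⌊k/2⌋` are at distance two with the single common
neighbour `⌊k/2⌋`, while `0` and `⌊k/2⌋ + 1` (for odd `k`: `0` and `n/2 - 1`) are at distance two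
with at least two common neighbours.
-/

open SimpleGraph

namespace SimpleGraph

theorem Iso.ncard_setOf_and_adj {V W : Type*} {G : SimpleGraph V} {H : SimpleGraph W}
    (e : G ≃g H) (p : W → Prop) (y : V) :
    {z | p (e z) ∧ G.Adj y z}.ncard = {w | p w ∧ H.Adj (e y) w}.ncard := by
  have : {z | p (e z) ∧ G.Adj y z} = e ⁻¹' {w | p w ∧ H.Adj (e y) w} := by
    ext z; simp [e.map_adj_iff]
  rw [this, Set.ncard_preimage_of_injective_subset_range e.injective (by simp)]

theorem dist_eq_two_iff {V : Type*} {G : SimpleGraph V} {u v : V} :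
    G.dist u v = 2 ↔ u ≠ v ∧ ¬G.Adj u v ∧ (G.commonNeighbors u v).Nonempty := by
  rw [dist, ENat.toNat_eq_iff two_ne_zero]
  exact edist_eq_two_iff

section Circulant

variable {A : Type*} [AddCommGroup A] {s : Set A}

theorem circulantGraph_adj_neg {u v : A} :
    (circulantGraph s).Adj (-u) (-v) ↔ (circulantGraph s).Adj u v := by
  simp only [circulantGraph_adj, neg_inj, neg_sub_neg]
  tauto

variable (s) in
def circulantGraphAddRight (d : A) : circulantGraph s ≃g circulantGraph s where
  toEquiv := Equiv.addRight d
  map_rel_iff' := circulantGraph_adj_translate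

@[simp]
theorem circulantGraphAddRight_apply (d x : A) : circulantGraphAddRight s d x = x + d := rfl

variable (s) in
def circulantGraphNeg : circulantGraph s ≃g circulantGraph s where
  toEquiv := Equiv.neg A
  map_rel_iff' := circulantGraph_adj_neg

@[simp]
theorem circulantGraphNeg_apply (x : A) : circulantGraphNeg s x = -x := rfl

theorem circulantGraph_adj_iff_sub_mem (hs : -s = s) (h0 : 0 ∉ s) {u v : A} :
    (circulantGraph s).Adj u v ↔ v - u ∈ s := by
  have hsymm : u - v ∈ s ↔ v - u ∈ s := by
    rw [← neg_sub, ← Set.mem_neg, hs]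
  rw [circulantGraph_adj, hsymm, or_self, and_iff_right_iff_imp]
  rintro h rfl
  exact h0 (by simpa using h)

theorem ncard_neighborSet_circulantGraph (hs : -s = s) (h0 : 0 ∉ s) (v : A) :
    ((circulantGraph s).neighborSet v).ncard = s.ncard := by
  have : (circulantGraph s).neighborSet v = (v + ·) '' s := by
    ext w
    rw [mem_neighborSet, circulantGraph_adj_iff_sub_mem hs h0, Set.image_add_left]
    simp [sub_eq_neg_add]
  rw [this, Set.ncard_image_of_injective s (add_right_injective v)]

theorem isWitnessingPartition_circulantGraph [Fintype A] {m : ℕ} (c : A → Fin m)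
    (hc : ∀ x y, c x = c y ↔ x = y ∨ x = -y) (hc0 : ∀ x, (c x : ℕ) = 0 ↔ x = 0)
    (hsurj : Function.Surjective c) (u : A) :
    IsWitnessingPartition (circulantGraph s)
      (fun i j => {z | c z = i ∧ (circulantGraph s).Adj (Function.surjInv hsurj j) z}.ncard)
      u (fun v => c (v - u)) := by
  refine ⟨fun v => by rw [hc0, sub_eq_zero], fun j => ⟨Function.surjInv hsurj j + u, ?_⟩, ?_⟩
  · simp [Function.surjInv_eq hsurj]
  rintro i j y rfl
  set r := Function.surjInv hsurj (c (y - u))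
  have hcount : ∀ e : circulantGraph s ≃g circulantGraph s, (∀ z, c (e z) = c (z - u)) →
      e y = r → {z | c (z - u) = i ∧ (circulantGraph s).Adj y z}.ncard =
        {z | c z = i ∧ (circulantGraph s).Adj r z}.ncard := by
    intro e he hr
    simp only [← hr, ← he]
    exact e.ncard_setOf_and_adj (c · = i) y
  rcases (hc (y - u) r).mp (Function.surjInv_eq hsurj (c (y - u))).symm with h | h
  · exact hcount (circulantGraphAddRight s (-u)) (fun z => by simp [sub_eq_add_neg])
      (by simp [← h, sub_eq_add_neg])
  · refine hcount ((circulantGraphAddRight s (-u)).trans (circulantGraphNeg s)) (fun z => ?_) ?_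
    · simp [hc, sub_eq_add_neg]
    · simp [h, ← sub_eq_add_neg]

end Circulant

end SimpleGraph

namespace ZMod

variable {n : ℕ}

theorem intCast_eq_intCast_iff_of_abs_sub_lt {a b : ℤ} (h : |a - b| < n) :
    (a : ZMod n) = b ↔ a = b := by
  rw [intCast_eq_intCast_iff_dvd_sub, ← neg_sub, dvd_neg, ← sub_eq_zero (a := a)]
  exact ⟨fun hdvd => Int.eq_zero_of_abs_lt_dvd hdvd h, fun h0 => h0 ▸ dvd_zero _⟩

def cycleDist [NeZero n] (x : ZMod n) : Fin (n / 2 + 1) :=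
  ⟨x.valMinAbs.natAbs, Nat.lt_succ_of_le x.natAbs_valMinAbs_le⟩

theorem cycleDist_eq_cycleDist_iff [NeZero n] {x y : ZMod n} :
    cycleDist x = cycleDist y ↔ x = y ∨ x = -y := by
  rw [cycleDist, cycleDist, Fin.mk.injEq, natAbs_valMinAbs_eq_natAbs_valMinAbs]

theorem val_cycleDist_eq_zero_iff [NeZero n] {x : ZMod n} : (cycleDist x : ℕ) = 0 ↔ x = 0 := by
  rw [cycleDist, Int.natAbs_eq_zero, valMinAbs_eq_zero]

theorem cycleDist_surjective [NeZero n] : Function.Surjective (cycleDist (n := n)) := by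
  intro j
  refine ⟨(j : ℕ), Fin.ext ?_⟩
  change ((j : ℕ) : ZMod n).valMinAbs.natAbs = j
  rw [valMinAbs_natCast_of_le_half (Nat.lt_succ_iff.mp j.isLt), Int.natAbs_natCast]

end ZMod

open ZMod in
theorem circulantGraph_isHighlyRegular {n : ℕ} [NeZero n] (hn : 3 ≤ n) (s : Set (ZMod n)) :
    IsHighlyRegular (circulantGraph s) :=
  ⟨n / 2 + 1, _, by omega, Or.inl (by rw [ZMod.card]; omega), fun u =>
    ⟨_, isWitnessingPartition_circulantGraph cycleDist (fun _ _ => cycleDist_eq_cycleDist_iff)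
      (fun _ => val_cycleDist_eq_zero_iff) cycleDist_surjective u⟩⟩

theorem circulantGraph_connected_of_one_mem {n : ℕ} [NeZero n] {s : Set (ZMod n)} (h : 1 ∈ s) :
    (circulantGraph s).Connected := by
  have hreach : ∀ m : ℕ, (circulantGraph s).Reachable 0 (m : ZMod n) := by
    intro m
    induction m with
    | zero => simp
    | succ m ih =>
      refine ih.trans ?_
      by_cases heq : (m : ZMod n) = (m + 1 : ℕ)
      · rw [heq]
      · exact Adj.reachable ⟨heq, Or.inr (by simpa using h)⟩
  refine (connected_iff _).mpr ⟨fun u v => ?_, ⟨0⟩⟩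
  rw [← ZMod.natCast_zmod_val u, ← ZMod.natCast_zmod_val v]
  exact (hreach _).symm.trans (hreach _)

theorem IsDistanceRegular.ncard_commonNeighbors_eq {V : Type*} [Fintype V] {G : SimpleGraph V}
    (hG : IsDistanceRegular G) {u v x y : V} (huv : G.dist u v = 2) (hxy : G.dist x y = 2) :
    (G.commonNeighbors u v).ncard = (G.commonNeighbors x y).ncard := by
  obtain ⟨hconn, hreg⟩ := hG
  have : Nonempty V := hconn.nonempty
  have hdiam : 2 ≤ G.diam := huv ▸ dist_le_diam (connected_iff_ediam_ne_top.mp hconn)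
  have hcommon : ∀ a b : V, {w | G.Adj b w ∧ G.dist a w = 1} = G.commonNeighbors a b := by
    intro a b
    ext w
    simp [dist_eq_one_iff_adj, mem_commonNeighbors, and_comm]
  simpa only [hcommon] using hreg 2 (by norm_num) hdiam 1 (Or.inl rfl) u v x y huv hxy

section BandGraph

variable {n k : ℕ}

noncomputable def bandJumps (n k : ℕ) : Finset ℤ :=
  (Finset.Icc (-(k / 2 : ℤ)) (k / 2)).erase 0 ∪ if k % 2 = 1 then {(n / 2 : ℤ)} else ∅

def bandGraph (n k : ℕ) : SimpleGraph (ZMod n) :=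
  circulantGraph ((↑) '' (bandJumps n k : Set ℤ))

theorem mem_bandJumps {d : ℤ} :
    d ∈ bandJumps n k ↔ d ≠ 0 ∧ -(k / 2 : ℤ) ≤ d ∧ d ≤ k / 2 ∨ k % 2 = 1 ∧ d = n / 2 := by
  unfold bandJumps
  split_ifs with hk <;> simp [hk, or_comm]

theorem card_bandJumps (hk : k < n) : (bandJumps n k).card = k := by
  have hIcc : ((Finset.Icc (-(k / 2 : ℤ)) (k / 2)).erase 0).card = 2 * (k / 2) := by
    rw [Finset.card_erase_of_mem (by simp; omega), Int.card_Icc]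
    omega
  unfold bandJumps
  split_ifs with hodd
  · rw [Finset.card_union_of_disjoint (by simp; omega), hIcc, Finset.card_singleton]
    omega
  · rw [Finset.union_empty, hIcc]
    omega

theorem mem_Ioc_of_mem_bandJumps (hn : Even n) (hk : k < n) {d : ℤ} (hd : d ∈ bandJumps n k) :
    d ∈ Set.Ioc (-(n / 2 : ℤ)) (n / 2) := by
  have := Nat.even_iff.mp hn
  rw [mem_bandJumps] at hd
  rw [Set.mem_Ioc]
  omega

theorem injOn_intCast_bandJumps (hn : Even n) (hk : k < n) :
    Set.InjOn (Int.cast : ℤ → ZMod n) (bandJumps n k) := by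
  intro a ha b hb hab
  have := Set.mem_Ioc.mp (mem_Ioc_of_mem_bandJumps hn hk ha)
  have := Set.mem_Ioc.mp (mem_Ioc_of_mem_bandJumps hn hk hb)
  exact (ZMod.intCast_eq_intCast_iff_of_abs_sub_lt (abs_sub_lt_iff.2 ⟨by omega, by omega⟩)).mp hab

theorem neg_image_bandJumps (hn : Even n) :
    -((↑) '' (bandJumps n k : Set ℤ) : Set (ZMod n)) = (↑) '' (bandJumps n k : Set ℤ) := by
  have hneg : ∀ x ∈ ((↑) '' (bandJumps n k : Set ℤ) : Set (ZMod n)),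
      -x ∈ ((↑) '' (bandJumps n k : Set ℤ) : Set (ZMod n)) := by
    rintro _ ⟨d, hd, rfl⟩
    have hd' := mem_bandJumps.mp hd
    by_cases hhalf : d = n / 2
    · refine ⟨d, hd, ?_⟩
      rw [← Int.cast_neg, ZMod.intCast_eq_intCast_iff_dvd_sub]
      exact ⟨-1, by have := Nat.even_iff.mp hn; omega⟩
    · exact ⟨-d, mem_bandJumps.mpr (by omega), Int.cast_neg d⟩
  ext x
  exact ⟨fun hx => neg_neg x ▸ hneg _ hx, hneg x⟩

theorem zero_notMem_image_bandJumps (hn : Even n) (hk : k < n) :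
    (0 : ZMod n) ∉ ((↑) '' (bandJumps n k : Set ℤ) : Set (ZMod n)) := by
  rintro ⟨d, hd, hd0⟩
  have := Set.mem_Ioc.mp (mem_Ioc_of_mem_bandJumps hn hk hd)
  rw [← Int.cast_zero, ZMod.intCast_eq_intCast_iff_of_abs_sub_lt
    (abs_sub_lt_iff.2 ⟨by omega, by omega⟩)] at hd0
  have := Nat.even_iff.mp hn
  rw [Finset.mem_coe, mem_bandJumps] at hd
  omega

theorem bandGraph_adj_iff (hn : Even n) (hk : k < n) {x y : ZMod n} :
    (bandGraph n k).Adj x y ↔ ∃ d ∈ bandJumps n k, (d : ZMod n) = y - x :=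
  circulantGraph_adj_iff_sub_mem (neg_image_bandJumps hn) (zero_notMem_image_bandJumps hn hk)

theorem bandGraph_adj_intCast_iff (hn : Even n) (hk : k < n) {a b : ℤ}
    (h₁ : -(n / 2 : ℤ) < b - a) (h₂ : b - a ≤ n / 2) :
    (bandGraph n k).Adj a b ↔ b - a ∈ bandJumps n k := by
  rw [bandGraph_adj_iff hn hk, ← Int.cast_sub]
  refine ⟨fun ⟨d, hd, hdeq⟩ => ?_, fun h => ⟨_, h, rfl⟩⟩
  have := Set.mem_Ioc.mp (mem_Ioc_of_mem_bandJumps hn hk hd)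
  rwa [← (ZMod.intCast_eq_intCast_iff_of_abs_sub_lt
    (abs_sub_lt_iff.2 ⟨by omega, by omega⟩)).mp hdeq]

theorem bandGraph_adj_zero_intCast_iff (hn : Even n) (hk : k < n) {b : ℤ}
    (h₁ : -(n / 2 : ℤ) < b) (h₂ : b ≤ n / 2) :
    (bandGraph n k).Adj 0 b ↔ b ∈ bandJumps n k := by
  simpa using bandGraph_adj_intCast_iff hn hk (a := 0) (by simpa using h₁) (by simpa using h₂)

theorem ncard_neighborSet_bandGraph (hn : Even n) (hk : k < n) (v : ZMod n) :
    ((bandGraph n k).neighborSet v).ncard = k := by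
  rw [bandGraph, ncard_neighborSet_circulantGraph (neg_image_bandJumps hn)
    (zero_notMem_image_bandJumps hn hk), (injOn_intCast_bandJumps hn hk).ncard_image,
    Set.ncard_coe_finset, card_bandJumps hk]

theorem bandGraph_connected [NeZero n] (hk : 2 ≤ k) : (bandGraph n k).Connected :=
  circulantGraph_connected_of_one_mem ⟨1, mem_bandJumps.mpr (by omega), Int.cast_one⟩

end BandGraph

section NotDistanceRegular

variable {n k : ℕ}

theorem commonNeighbors_bandGraph_subset (hn : Even n) (hk : 2 ≤ k) (hkn : 3 * k < n) :
    (bandGraph n k).commonNeighbors 0 ((2 * (k / 2) : ℤ) : ZMod n) ⊆ {((k / 2 : ℤ) : ZMod n)} := by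
  have := Nat.even_iff.mp hn
  intro x hx
  obtain ⟨h0x, htx⟩ := (mem_commonNeighbors _).mp hx
  obtain ⟨d, hd, rfl⟩ := by simpa using (bandGraph_adj_iff hn (by omega)).mp h0x
  have hd' := mem_bandJumps.mp hd
  rw [bandGraph_adj_intCast_iff (a := 2 * (k / 2)) (b := d) hn (by omega) (by omega) (by omega),
    mem_bandJumps] at htx
  have hdt : d = k / 2 := by omega
  rw [Set.mem_singleton_iff, hdt]

theorem dist_bandGraph_zero_two_mul (hn : Even n) (hk : 2 ≤ k) (hkn : 3 * k < n) :
    (bandGraph n k).dist 0 ((2 * (k / 2) : ℤ) : ZMod n) = 2 := by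
  have := Nat.even_iff.mp hn
  refine dist_eq_two_iff.mpr ⟨?_, ?_, ((k / 2 : ℤ) : ZMod n), (mem_commonNeighbors _).mpr ⟨?_, ?_⟩⟩
  · rw [← Int.cast_zero, Ne, ZMod.intCast_eq_intCast_iff_of_abs_sub_lt
      (abs_sub_lt_iff.2 ⟨by omega, by omega⟩)]
    omega
  · rw [bandGraph_adj_zero_intCast_iff hn (by omega) (by omega) (by omega), mem_bandJumps]
    omega
  · rw [bandGraph_adj_zero_intCast_iff hn (by omega) (by omega) (by omega), mem_bandJumps]
    omega
  · rw [bandGraph_adj_intCast_iff hn (by omega) (by omega) (by omega), mem_bandJumps]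
    omega


theorem exists_dist_bandGraph_eq_two_one_lt_ncard [NeZero n] (hn : Even n) (hk : 3 ≤ k)
    (hkn : 3 * k < n) :
    ∃ v, (bandGraph n k).dist 0 v = 2 ∧ 1 < ((bandGraph n k).commonNeighbors 0 v).ncard := by
  have := Nat.even_iff.mp hn
  have hadj : ∀ {a b : ℤ}, -(n / 2 : ℤ) < b - a → b - a ≤ n / 2 → b - a ∈ bandJumps n k →
      (bandGraph n k).Adj a b := fun h₁ h₂ => (bandGraph_adj_intCast_iff hn (by omega) h₁ h₂).mpr
  have hadj0 : ∀ {b : ℤ}, -(n / 2 : ℤ) < b → b ≤ n / 2 →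
      ((bandGraph n k).Adj 0 b ↔ b ∈ bandJumps n k) := bandGraph_adj_zero_intCast_iff hn (by omega)
  have hne : ∀ {a b : ℤ}, |a - b| < n → a ≠ b → (a : ZMod n) ≠ b :=
    fun h => mt (ZMod.intCast_eq_intCast_iff_of_abs_sub_lt h).mp
  suffices ∃ v w₁ w₂ : ℤ, (0 : ZMod n) ≠ v ∧ ¬(bandGraph n k).Adj 0 v ∧ (w₁ : ZMod n) ≠ w₂ ∧
      (w₁ : ZMod n) ∈ (bandGraph n k).commonNeighbors 0 v ∧
      (w₂ : ZMod n) ∈ (bandGraph n k).commonNeighbors 0 v by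
    obtain ⟨v, w₁, w₂, h0v, hadj0v, hw, hw₁, hw₂⟩ := this
    exact ⟨v, dist_eq_two_iff.mpr ⟨h0v, hadj0v, _, hw₁⟩,
      (Set.one_lt_ncard_iff (Set.toFinite _)).mpr ⟨_, _, hw₁, hw₂, hw⟩⟩
  by_cases hodd : k % 2 = 1
  · refine ⟨n / 2 - 1, -1, n / 2, ?_, ?_, hne (abs_sub_lt_iff.2 ⟨by omega, by omega⟩) (by omega),
      (mem_commonNeighbors _).mpr ⟨?_, ?_⟩, (mem_commonNeighbors _).mpr ⟨?_, ?_⟩⟩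
    · rw [← Int.cast_zero]
      exact hne (abs_sub_lt_iff.2 ⟨by omega, by omega⟩) (by omega)
    · rw [hadj0 (by omega) (by omega), mem_bandJumps]
      omega
    · exact (hadj0 (by omega) (by omega)).mpr (mem_bandJumps.mpr (by omega))
    · exact (hadj (by omega) (by omega) (mem_bandJumps.mpr (by omega))).symm
    · exact (hadj0 (by omega) (by omega)).mpr (mem_bandJumps.mpr (by omega))
    · exact hadj (by omega) (by omega) (mem_bandJumps.mpr (by omega))
  · refine ⟨k / 2 + 1, 1, k / 2, ?_, ?_, hne (abs_sub_lt_iff.2 ⟨by omega, by omega⟩) (by omega),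
      (mem_commonNeighbors _).mpr ⟨?_, ?_⟩, (mem_commonNeighbors _).mpr ⟨?_, ?_⟩⟩
    · rw [← Int.cast_zero]
      exact hne (abs_sub_lt_iff.2 ⟨by omega, by omega⟩) (by omega)
    · rw [hadj0 (by omega) (by omega), mem_bandJumps]
      omega
    · exact (hadj0 (by omega) (by omega)).mpr (mem_bandJumps.mpr (by omega))
    · exact (hadj (by omega) (by omega) (mem_bandJumps.mpr (by omega))).symm
    · exact (hadj0 (by omega) (by omega)).mpr (mem_bandJumps.mpr (by omega))
    · exact (hadj (by omega) (by omega) (mem_bandJumps.mpr (by omega))).symm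

theorem bandGraph_not_isDistanceRegular [NeZero n] (hn : Even n) (hk : 3 ≤ k) (hkn : 3 * k < n) :
    ¬IsDistanceRegular (bandGraph n k) := by
  intro hG
  obtain ⟨v, hv, hcommon⟩ := exists_dist_bandGraph_eq_two_one_lt_ncard hn hk hkn
  have hle := Set.ncard_le_ncard (commonNeighbors_bandGraph_subset hn (by omega) hkn)
  rw [hG.ncard_commonNeighbors_eq (dist_bandGraph_zero_two_mul hn (by omega) hkn) hv,
    Set.ncard_singleton] at hle
  omega

end NotDistanceRegular

/-- For every `k > 2` there are infinitely many connected highly-regular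
graphs of valency `k` which are not distance-regular: for every `N` there is one on
more than `N` vertices. -/
theorem stmt17 (k : ℕ) (hk : 2 < k) (N : ℕ) :
    ∃ n : ℕ, N < n ∧ ∃ G : SimpleGraph (Fin n), G.Connected ∧ IsHighlyRegular G ∧
      (∀ v : Fin n, {w : Fin n | G.Adj v w}.ncard = k) ∧ ¬ IsDistanceRegular G := by
  have hn : Even (2 * (N + 2 * k) + 2) := ⟨N + 2 * k + 1, by ring⟩
  -- `ZMod (m + 1)` is `Fin (m + 1)` by definition, so a graph on `ZMod n` is a graph on `Fin n`.
  exact ⟨2 * (N + 2 * k) + 2, by omega, bandGraph (2 * (N + 2 * k) + 2) k,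
    bandGraph_connected (by omega), circulantGraph_isHighlyRegular (by omega) _,
    ncard_neighborSet_bandGraph hn (by omega),
    bandGraph_not_isDistanceRegular hn hk (by omega)⟩
end

section
/- Let Γ be a connected highly-regular graph with CAM C = [c_{i,j}]_{1≤i,j≤m}, let u be a vertex with witnessing partition V_1(u) = {u}, …, V_m(u), and let A be the adjacency matrix of Γ over ℝ, with C regarded as an m × m real matrix. Then for every real polynomial p, every t, s ∈ {1, …, m} and every vertex w ∈ V_s(u): Σ_{z∈V_t(u)} (p(A))_{z,w} = (p(C))_{t,s}. In particular, (p(A))_{u,u} = (p(C))_{1,1} for every vertex u (so this diagonal entry does not depend on u), and for any two vertices v, w lying in the same cell V_s(u) one has (p(A))_{u,v} = (p(A))_{u,w} = (p(C))_{1,s}. -/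
/-- For a connected highly-regular graph with CAM `C`, a witnessing
partition `P` at `u`, and any real polynomial `p`:
`Σ_{z ∈ V_t(u)} p(A)_{z,w} = p(C)_{t,s}` whenever `w ∈ V_s(u)`; in particular
`p(A)_{u,u} = p(C)_{1,1}`, and `p(A)_{u,v} = p(A)_{u,w} = p(C)_{1,s}` whenever
`v, w` lie in the same cell `V_s(u)`. -/
theorem stmt19 {V : Type*} [Fintype V] [DecidableEq V]
    (G : SimpleGraph V) [DecidableRel G.Adj] (hconn : G.Connected)
    {m : ℕ} (C : Fin m → Fin m → ℕ) (hC : IsCAM G C)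
    (u : V) (P : V → Fin m) (hP : IsWitnessingPartition G C u P)
    (p : Polynomial ℝ) :
    (∀ (t s : Fin m) (w : V), P w = s →
      ∑ z ∈ Finset.univ.filter (fun z : V => P z = t),
          (Polynomial.aeval (G.adjMatrix ℝ) p) z w =
        (Polynomial.aeval (Matrix.of fun (i j : Fin m) => (C i j : ℝ)) p) t s) ∧
    ((Polynomial.aeval (G.adjMatrix ℝ) p) u u =
      (Polynomial.aeval (Matrix.of fun (i j : Fin m) => (C i j : ℝ)) p) (P u) (P u)) ∧
    (∀ (s : Fin m) (v w : V), P v = s → P w = s →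
      (Polynomial.aeval (G.adjMatrix ℝ) p) u v =
        (Polynomial.aeval (Matrix.of fun (i j : Fin m) => (C i j : ℝ)) p) (P u) s ∧
      (Polynomial.aeval (G.adjMatrix ℝ) p) u w =
        (Polynomial.aeval (Matrix.of fun (i j : Fin m) => (C i j : ℝ)) p) (P u) s) := by

  classical
  obtain ⟨h1, _h2, h3⟩ := hP
  set A : Matrix V V ℝ := G.adjMatrix ℝ with hA
  set Cm : Matrix (Fin m) (Fin m) ℝ := Matrix.of fun i j => (C i j : ℝ) with hCm
  set S : Matrix (Fin m) V ℝ := Matrix.of fun t z => if P z = t then (1:ℝ) else 0 with hS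
  have hSA : S * A = Cm * S := by
    ext t w
    rw [Matrix.mul_apply, Matrix.mul_apply]
    have lhs : ∑ z, S t z * A z w = (C t (P w) : ℝ) := by
      have := h3 t (P w) w rfl
      have hset : {z : V | P z = t ∧ G.Adj w z} =
          ↑(Finset.univ.filter (fun z => P z = t ∧ G.Adj w z)) := by
        ext z; simp
      rw [hset, Set.ncard_coe_finset] at this
      calc ∑ z, S t z * A z w
          = ∑ z, (if P z = t ∧ G.Adj w z then (1:ℝ) else 0) := by
            apply Finset.sum_congr rfl
            intro z _
            simp only [hS, hA, Matrix.of_apply, SimpleGraph.adjMatrix_apply]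
            by_cases h : P z = t <;> by_cases h' : G.Adj z w <;>
              simp [h, h', G.adj_comm w z]
        _ = ((Finset.univ.filter (fun z => P z = t ∧ G.Adj w z)).card : ℝ) := by
            rw [Finset.sum_boole]
        _ = (C t (P w) : ℝ) := by rw [this]
    have rhs : ∑ j, Cm t j * S j w = (C t (P w) : ℝ) := by
      simp [hS, hCm, mul_ite, Finset.sum_ite_eq]
    rw [lhs, rhs]
  have hpow : ∀ n : ℕ, S * A ^ n = Cm ^ n * S := by
    intro n
    induction n with
    | zero => simp
    | succ k ih =>
      rw [pow_succ, pow_succ, ← Matrix.mul_assoc, ih, Matrix.mul_assoc, hSA,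
        ← Matrix.mul_assoc]
  have haeval : S * (Polynomial.aeval A p) = (Polynomial.aeval Cm p) * S := by
    induction p using Polynomial.induction_on' with
    | add q r hq hr => rw [map_add, map_add, Matrix.mul_add, Matrix.add_mul, hq, hr]
    | monomial n a =>
      rw [Polynomial.aeval_monomial, Polynomial.aeval_monomial, ← Algebra.smul_def,
        ← Algebra.smul_def, Matrix.mul_smul, Matrix.smul_mul, hpow]
  have hmain : ∀ (t s : Fin m) (w : V), P w = s →
      ∑ z ∈ Finset.univ.filter (fun z : V => P z = t),
          (Polynomial.aeval A p) z w = (Polynomial.aeval Cm p) t s := by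
    intro t s w hw
    have e1 : ∑ z ∈ Finset.univ.filter (fun z : V => P z = t),
        (Polynomial.aeval A p) z w = (S * Polynomial.aeval A p) t w := by
      rw [Matrix.mul_apply, Finset.sum_filter]
      apply Finset.sum_congr rfl
      intro z _
      by_cases h : P z = t <;> simp [hS, h]
    rw [e1, haeval, Matrix.mul_apply]
    subst hw
    simp [hS, mul_ite, Finset.sum_ite_eq]
  have hcell : Finset.univ.filter (fun z : V => P z = P u) = {u} := by
    have hu0 : (P u : ℕ) = 0 := (h1 u).mpr rfl
    ext z
    simp only [Finset.mem_filter, Finset.mem_univ, true_and, Finset.mem_singleton]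
    constructor
    · intro h
      exact (h1 z).mp (by rw [h, hu0])
    · rintro rfl; rfl
  refine ⟨hmain, ?_, ?_⟩
  · have := hmain (P u) (P u) u rfl
    rw [hcell, Finset.sum_singleton] at this
    exact this
  · intro s v w hv hw
    constructor
    · have := hmain (P u) s v hv
      rw [hcell, Finset.sum_singleton] at this
      exact this
    · have := hmain (P u) s w hw
      rw [hcell, Finset.sum_singleton] at this
      exact this
end
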